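/- arXiv:1804.09544 — 6 statements merged into one kernel-verified Lean document; each statement's English description precedes it below -/
import Mathlib

section
/- Suppose R_1 = (a_0,…,a_n,ε_1) and R_2 = (a'_0,…,a'_n,ε_2) are representations of Q with dimension vector (1,1,1) satisfying ε_1 ≠ 0 and ε_2 ≠ 0. If F(R_1) and F(R_2) lie in the same G_0-orbit, then R_1 and R_2 lie in the same G-orbit. -/
/-- The action of `G = (kˣ)³` on representations of `Q` with dimension vector `(1,1,1)`:
`(g₁,g₂,g₃)·((a_i), ε) = ((g₃g₁⁻¹ a_i)_{i ≤ m}, (g₃g₂⁻¹ a_i)_{i > m}, g₂g₁⁻¹ ε)`. -/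
def Gact {k : Type*} [Field k] (n m : ℕ) (g : kˣ × kˣ × kˣ)
    (R : (Fin (n + 1) → k) × k) : (Fin (n + 1) → k) × k :=
  (fun i => if (i : ℕ) ≤ m then (g.2.2 : k) * (g.1 : k)⁻¹ * R.1 i
            else (g.2.2 : k) * (g.2.1 : k)⁻¹ * R.1 i,
   (g.2.1 : k) * (g.1 : k)⁻¹ * R.2)

/-- The action of `G₀ = (kˣ)²` on representations of the `(n+1)`-Kronecker quiver with
dimension vector `(1,1)`: `(g₁,g₂)·(b_i) = (g₂g₁⁻¹ b_i)`. -/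
def G0act {k : Type*} [Field k] (n : ℕ) (g : kˣ × kˣ) (b : Fin (n + 1) → k) :
    Fin (n + 1) → k :=
  fun i => (g.2 : k) * (g.1 : k)⁻¹ * b i

/-- The map `F : k^{n+2} → k^{n+1}`, `F((a_0,…,a_n), ε) = (a_0,…,a_m, εa_{m+1},…,εa_n)`. -/
def Fmap {k : Type*} [Field k] (n m : ℕ) (R : (Fin (n + 1) → k) × k) :
    Fin (n + 1) → k :=
  fun i => if (i : ℕ) ≤ m then R.1 i else R.2 * R.1 i

/-- If `R₁ = ((a_i), ε₁)` and `R₂ = ((a'_i), ε₂)` are representations of `Q` with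
dimension vector `(1,1,1)` with `ε₁ ≠ 0` and `ε₂ ≠ 0`, and if `F(R₁)` and `F(R₂)` lie in the same
`G₀`-orbit, then `R₁` and `R₂` lie in the same `G`-orbit. -/
theorem stmt8 {k : Type*} [Field k] [IsAlgClosed k] [CharZero k]
    (n m : ℕ) (hn : 2 ≤ n) (hm : m + 2 ≤ n)
    (R₁ R₂ : (Fin (n + 1) → k) × k) (h₁ : R₁.2 ≠ 0) (h₂ : R₂.2 ≠ 0)
    (h : ∃ g : kˣ × kˣ, G0act n g (Fmap n m R₁) = Fmap n m R₂) :
    ∃ g : kˣ × kˣ × kˣ, Gact n m g R₁ = R₂ := by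
  obtain ⟨⟨u, v⟩, hg⟩ := h
  refine ⟨(1, Units.mk0 (R₂.2 / R₁.2) (div_ne_zero h₂ h₁), v * u⁻¹), ?_⟩
  have key : ∀ i, G0act n (u, v) (Fmap n m R₁) i = Fmap n m R₂ i := fun i => congrFun hg i
  simp only [G0act, Fmap] at key
  refine Prod.ext ?_ ?_
  · funext i
    have := key i
    by_cases hi : (i : ℕ) ≤ m <;> simp [Gact, hi] at this ⊢
    · linear_combination this
    · field_simp at this ⊢
      linear_combination this
  · simp [Gact, div_mul_cancel₀ _ h₁]
end

section
/- Fix integers 0 < p < q and set θ = (−p, p−q, q). A representation R = (a_0,…,a_n,ε) of Q with dimension vector (1,1,1) and with ε = 0 is θ-stable if and only if a_i ≠ 0 for at least one i with 0 ≤ i ≤ m and a_j ≠ 0 for at least one j with m+1 ≤ j ≤ n. -/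
/-- A subset `S` of the vertex set `{1,2,3}` of the quiver `Q` (encoded as `Fin 3`, with
`0 ↦` vertex 1, `1 ↦` vertex 2, `2 ↦` vertex 3; arrows `x_0,…,x_m : 1 → 3`, `e : 1 → 2`,
`x_{m+1},…,x_n : 2 → 3`) is a subrepresentation support of the representation
`R = ((a_0,…,a_n), ε)` with dimension vector `(1,1,1)` if every arrow with nonzero scalar and
source in `S` has target in `S`. -/
def QSupport {k : Type*} [Field k] (n m : ℕ) (R : (Fin (n + 1) → k) × k)
    (S : Finset (Fin 3)) : Prop :=
  (∀ i : Fin (n + 1), (i : ℕ) ≤ m → R.1 i ≠ 0 → (0 : Fin 3) ∈ S → (2 : Fin 3) ∈ S) ∧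
  (R.2 ≠ 0 → (0 : Fin 3) ∈ S → (1 : Fin 3) ∈ S) ∧
  (∀ i : Fin (n + 1), m < (i : ℕ) → R.1 i ≠ 0 → (1 : Fin 3) ∈ S → (2 : Fin 3) ∈ S)

/-- `θ`-semistability for representations of `Q` with dimension vector `(1,1,1)`. -/
def QSemistable {k : Type*} [Field k] (n m : ℕ) (θ : Fin 3 → ℤ)
    (R : (Fin (n + 1) → k) × k) : Prop :=
  ∀ S : Finset (Fin 3), QSupport n m R S → 0 ≤ ∑ v ∈ S, θ v

/-- `θ`-stability for representations of `Q` with dimension vector `(1,1,1)`. -/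
def QStable {k : Type*} [Field k] (n m : ℕ) (θ : Fin 3 → ℤ)
    (R : (Fin (n + 1) → k) × k) : Prop :=
  QSemistable n m θ R ∧
  ∀ S : Finset (Fin 3), QSupport n m R S → S.Nonempty → S ≠ Finset.univ →
    0 < ∑ v ∈ S, θ v

/-- Fix `0 < p < q` and `θ = (−p, p−q, q)`. A representation
`R = ((a_0,…,a_n), ε)` of `Q` with dimension vector `(1,1,1)` and `ε = 0` is `θ`-stable iff
`a_i ≠ 0` for at least one `i ≤ m` and `a_j ≠ 0` for at least one `j` with `m+1 ≤ j ≤ n`. -/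
theorem stmt9 {k : Type*} [Field k] [IsAlgClosed k] [CharZero k]
    (n m : ℕ) (hn : 2 ≤ n) (hm : m + 2 ≤ n)
    (p q : ℤ) (hp : 0 < p) (hpq : p < q)
    (R : (Fin (n + 1) → k) × k) (hε : R.2 = 0) :
    QStable n m ![-p, p - q, q] R ↔
      ((∃ i : Fin (n + 1), (i : ℕ) ≤ m ∧ R.1 i ≠ 0) ∧
       (∃ j : Fin (n + 1), m < (j : ℕ) ∧ R.1 j ≠ 0)) := by
  have sum3 : ∀ S : Finset (Fin 3),
      ∑ v ∈ S, (![-p, p - q, q]) v =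
        (if (0:Fin 3) ∈ S then -p else 0) + (if (1:Fin 3) ∈ S then p - q else 0) +
          (if (2:Fin 3) ∈ S then q else 0) := by
    intro S
    have h : ∑ v ∈ S, (![-p, p - q, q]) v
        = ∑ v ∈ Finset.univ, if v ∈ S then (![-p, p - q, q]) v else 0 := by
      rw [← Finset.sum_filter]
      congr 1
      simp
    rw [h, Fin.sum_univ_three]
    rfl
  constructor
  · rintro ⟨hss, _⟩
    constructor
    · by_contra hc
      push_neg at hc
      have hsupp : QSupport n m R ({0} : Finset (Fin 3)) := by
        refine ⟨?_, ?_, ?_⟩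
        · intro i hi hne _
          exact absurd (hc i hi) hne
        · intro h; exact absurd hε h
        · intro i _ _ h
          simp at h
      have := hss {0} hsupp
      rw [sum3] at this
      simp at this
      omega
    · by_contra hc
      push_neg at hc
      have hsupp : QSupport n m R ({1} : Finset (Fin 3)) := by
        refine ⟨?_, ?_, ?_⟩
        · intro i _ _ h
          simp at h
        · intro h; exact absurd hε h
        · intro i hi hne _
          exact absurd (hc i hi) hne
      have := hss {1} hsupp
      rw [sum3] at this
      simp at this
      omega
  · rintro ⟨⟨i, hi, hai⟩, ⟨j, hj, haj⟩⟩
    have key : ∀ S : Finset (Fin 3), QSupport n m R S →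
        ((0:Fin 3) ∈ S → (2:Fin 3) ∈ S) ∧ ((1:Fin 3) ∈ S → (2:Fin 3) ∈ S) := by
      intro S ⟨h1, _, h3⟩
      exact ⟨h1 i hi hai, h3 j hj haj⟩
    constructor
    · intro S hS
      obtain ⟨k0, k1⟩ := key S hS
      rw [sum3]
      by_cases h0 : (0:Fin 3) ∈ S <;> by_cases h1 : (1:Fin 3) ∈ S <;>
        by_cases h2 : (2:Fin 3) ∈ S <;>
        simp_all <;> omega
    · intro S hS hne hnu
      obtain ⟨k0, k1⟩ := key S hS
      rw [sum3]
      have hnotall : ¬ ((0:Fin 3) ∈ S ∧ (1:Fin 3) ∈ S ∧ (2:Fin 3) ∈ S) := by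
        rintro ⟨h0, h1, h2⟩
        apply hnu
        ext v
        fin_cases v <;> simp [h0, h1, h2]
      have hsome : (0:Fin 3) ∈ S ∨ (1:Fin 3) ∈ S ∨ (2:Fin 3) ∈ S := by
        obtain ⟨v, hv⟩ := hne
        fin_cases v
        · exact Or.inl hv
        · exact Or.inr (Or.inl hv)
        · exact Or.inr (Or.inr hv)
      by_cases h0 : (0:Fin 3) ∈ S <;> by_cases h1 : (1:Fin 3) ∈ S <;>
        by_cases h2 : (2:Fin 3) ∈ S <;>
        simp_all <;> omega
end

section
/- Fix integers 0 < p < q, set θ = (−p, p−q, q) and θ_0 = (−p, p). If R = (a_0,…,a_n,ε) is a θ-stable representation of Q with dimension vector (1,1,1), then F(R) = (a_0,…,a_m, εa_{m+1},…,εa_n) is a θ_0-stable (in particular θ_0-semistable) representation of the (n+1)-Kronecker quiver Q_0 with dimension vector (1,1). -/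
/-- Subrepresentation support for the `(n+1)`-Kronecker quiver `Q₀` (vertices `Fin 2`,
`0 ↦` vertex 1, `1 ↦` vertex 2; arrows `x_0,…,x_n : 1 → 2`). -/
def KronSupport {k : Type*} [Field k] (n : ℕ) (a : Fin (n + 1) → k)
    (S : Finset (Fin 2)) : Prop :=
  ∀ i : Fin (n + 1), a i ≠ 0 → (0 : Fin 2) ∈ S → (1 : Fin 2) ∈ S

/-- `θ`-semistability for the `(n+1)`-Kronecker quiver, dimension vector `(1,1)`. -/
def KronSemistable {k : Type*} [Field k] (n : ℕ) (θ : Fin 2 → ℤ)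
    (a : Fin (n + 1) → k) : Prop :=
  ∀ S : Finset (Fin 2), KronSupport n a S → 0 ≤ ∑ v ∈ S, θ v

/-- `θ`-stability for the `(n+1)`-Kronecker quiver, dimension vector `(1,1)`. -/
def KronStable {k : Type*} [Field k] (n : ℕ) (θ : Fin 2 → ℤ)
    (a : Fin (n + 1) → k) : Prop :=
  KronSemistable n θ a ∧
  ∀ S : Finset (Fin 2), KronSupport n a S → S.Nonempty → S ≠ Finset.univ →
    0 < ∑ v ∈ S, θ v

/-- Fix `0 < p < q`, `θ = (−p, p−q, q)` and `θ₀ = (−p, p)`. If `R` is a `θ`-stable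
representation of `Q` with dimension vector `(1,1,1)`, then `F(R)` is a `θ₀`-stable (in
particular `θ₀`-semistable) representation of the `(n+1)`-Kronecker quiver with dimension vector
`(1,1)`. -/
theorem stmt11 {k : Type*} [Field k] [IsAlgClosed k] [CharZero k]
    (n m : ℕ) (hn : 2 ≤ n) (hm : m + 2 ≤ n)
    (p q : ℤ) (hp : 0 < p) (hpq : p < q)
    (R : (Fin (n + 1) → k) × k) (hs : QStable n m ![-p, p - q, q] R) :
    KronStable n ![-p, p] (Fmap n m R) ∧ KronSemistable n ![-p, p] (Fmap n m R) := by
  -- First: F(R) is not identically zero.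
  have hFne : ¬ (∀ i : Fin (n + 1), Fmap n m R i = 0) := by
    intro hF
    by_cases hε : R.2 = 0
    · -- S = {0} is a QSupport
      have hsup : QSupport n m R ({0} : Finset (Fin 3)) := by
        refine ⟨fun i hi hne _ => ?_, fun hne => absurd hε hne, fun i hi hne h1 => ?_⟩
        · exact absurd ((if_pos hi).symm.trans (hF i)) hne
        · exact absurd h1 (by decide)
      have := hs.2 {0} hsup ⟨0, by decide⟩ (by decide)
      simp at this
      omega
    · -- all a_i = 0, S = {0,1} is a QSupport
      have ha : ∀ i : Fin (n + 1), R.1 i = 0 := by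
        intro i
        by_cases hi : (i : ℕ) ≤ m
        · exact (if_pos hi).symm.trans (hF i)
        · have := (if_neg hi).symm.trans (hF i)
          rcases mul_eq_zero.mp this with h | h
          · exact absurd h hε
          · exact h
      have hsup : QSupport n m R ({0, 1} : Finset (Fin 3)) := by
        refine ⟨fun i _ hne _ => absurd (ha i) hne, fun _ _ => by decide,
          fun i _ hne _ => absurd (ha i) hne⟩
      have := hs.2 {0, 1} hsup ⟨0, by decide⟩ (by decide)
      rw [Finset.sum_pair (by decide : (0 : Fin 3) ≠ 1)] at this
      simp at this
      omega
  have key : KronStable n ![-p, p] (Fmap n m R) := by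
    constructor
    · intro S hS
      by_cases h0 : (0 : Fin 2) ∈ S
      · by_cases h1 : (1 : Fin 2) ∈ S
        · have : S = Finset.univ := by
            apply Finset.eq_univ_iff_forall.mpr
            intro x
            fin_cases x <;> assumption
          subst this
          simp [Fin.sum_univ_two]
        · exfalso
          apply hFne
          intro i
          by_contra hne
          exact h1 (hS i hne h0)
      · by_cases h1 : (1 : Fin 2) ∈ S
        · have : S = {1} := by
            apply Finset.eq_singleton_iff_unique_mem.mpr
            refine ⟨h1, fun x hx => ?_⟩
            fin_cases x
            · exact absurd hx h0
            · rfl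
          subst this
          simp
          omega
        · have : S = ∅ := by
            apply Finset.eq_empty_iff_forall_notMem.mpr
            intro x
            fin_cases x <;> assumption
          subst this
          simp
    · intro S hS hne hneq
      by_cases h0 : (0 : Fin 2) ∈ S
      · by_cases h1 : (1 : Fin 2) ∈ S
        · exfalso
          apply hneq
          apply Finset.eq_univ_iff_forall.mpr
          intro x
          fin_cases x <;> assumption
        · exfalso
          apply hFne
          intro i
          by_contra hn2
          exact h1 (hS i hn2 h0)
      · by_cases h1 : (1 : Fin 2) ∈ S
        · have : S = {1} := by
            apply Finset.eq_singleton_iff_unique_mem.mpr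
            refine ⟨h1, fun x hx => ?_⟩
            fin_cases x
            · exact absurd hx h0
            · rfl
          subst this
          simp
          omega
        · exfalso
          obtain ⟨x, hx⟩ := hne
          fin_cases x <;> [exact h0 hx; exact h1 hx]
  exact ⟨key, key.1⟩
end

section
/- Fix integers 0 < p < q and set θ = (−p, p−q, q). The map sending a pair ([a_0:…:a_m], [b_{m+1}:…:b_n]) ∈ P^m(k) × P^{n−m−1}(k) to the G-orbit of the representation (a_0,…,a_m,b_{m+1},…,b_n,0) is a well-defined bijection from P^m(k) × P^{n−m−1}(k) onto the set of G-orbits of θ-stable representations R = (a_0,…,a_n,ε) of Q with dimension vector (1,1,1) satisfying ε = 0. Moreover F(a_0,…,a_m,b_{m+1},…,b_n,0) = (a_0,…,a_m,0,…,0), so under this bijection F corresponds to the projection onto the first factor P^m(k). -/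
/-- Gluing `(a_0,…,a_m) ∈ k^{m+1}` and `(b_{m+1},…,b_n) ∈ k^{n-m}` into a vector
`(a_0,…,a_m,b_{m+1},…,b_n) ∈ k^{n+1}`. -/
def glue {k : Type*} [Field k] (n m : ℕ) (hm : m + 2 ≤ n)
    (a : Fin (m + 1) → k) (b : Fin (n - m) → k) : Fin (n + 1) → k :=
  fun i => if h : (i : ℕ) ≤ m then a ⟨i, by omega⟩
           else b ⟨(i : ℕ) - (m + 1), by have := i.isLt; omega⟩

section stmt12aux
variable {k : Type*} [Field k]

private lemma glue_low' (n m : ℕ) (hm : m + 2 ≤ n) (a : Fin (m+1) → k) (b : Fin (n-m) → k)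
    (i : Fin (n+1)) (hi : (i : ℕ) ≤ m) : glue n m hm a b i = a ⟨i, by omega⟩ := by
  simp [glue, hi]

private lemma glue_high' (n m : ℕ) (hm : m + 2 ≤ n) (a : Fin (m+1) → k) (b : Fin (n-m) → k)
    (i : Fin (n+1)) (j : Fin (n-m)) (hij : (i : ℕ) = m + 1 + j) :
    glue n m hm a b i = b j := by
  have h : ¬ (i : ℕ) ≤ m := by omega
  simp only [glue, dif_neg h]
  congr 1
  exact Fin.ext (show (i : ℕ) - (m + 1) = (j : ℕ) by omega)

private lemma sum_theta' (p q : ℤ) (S : Finset (Fin 3)) :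
    ∑ v ∈ S, (![-p, p - q, q] : Fin 3 → ℤ) v =
      (if (0 : Fin 3) ∈ S then -p else 0) + (if (1 : Fin 3) ∈ S then p - q else 0) +
        (if (2 : Fin 3) ∈ S then q else 0) := by
  have h := Finset.sum_ite_mem Finset.univ S (![-p, p - q, q] : Fin 3 → ℤ)
  rw [Finset.univ_inter] at h
  rw [← h, Fin.sum_univ_three]
  simp

private lemma stable_glue' (n m : ℕ) (hm : m + 2 ≤ n) (p q : ℤ) (hp : 0 < p) (hpq : p < q)
    (a : Fin (m+1) → k) (ha : a ≠ 0) (b : Fin (n-m) → k) (hb : b ≠ 0) :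
    QStable n m ![-p, p - q, q] ((glue n m hm a b, 0) : (Fin (n+1) → k) × k) := by
  obtain ⟨ja, hja⟩ := Function.ne_iff.mp ha
  obtain ⟨jb, hjb⟩ := Function.ne_iff.mp hb
  simp only [Pi.zero_apply] at hja hjb
  have key : ∀ S : Finset (Fin 3), QSupport n m ((glue n m hm a b, 0) : (Fin (n+1) → k) × k) S →
      ((0 : Fin 3) ∈ S → (2 : Fin 3) ∈ S) ∧ ((1 : Fin 3) ∈ S → (2 : Fin 3) ∈ S) := by
    intro S hS
    constructor
    · intro h0
      have hne : ((glue n m hm a b, (0:k)) : (Fin (n+1) → k) × k).1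
          (⟨ja, by omega⟩ : Fin (n+1)) ≠ 0 := by
        show glue n m hm a b ⟨ja, by omega⟩ ≠ 0
        rw [glue_low' n m hm a b ⟨ja, by omega⟩ (Nat.lt_succ_iff.mp ja.isLt)]
        exact hja
      exact hS.1 ⟨ja, by omega⟩ (Nat.lt_succ_iff.mp ja.isLt) hne h0
    · intro h1
      have hne : ((glue n m hm a b, (0:k)) : (Fin (n+1) → k) × k).1
          (⟨m + 1 + jb, by have := jb.isLt; omega⟩ : Fin (n+1)) ≠ 0 := by
        show glue n m hm a b ⟨m + 1 + jb, by have := jb.isLt; omega⟩ ≠ 0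
        rw [glue_high' n m hm a b ⟨m + 1 + jb, by have := jb.isLt; omega⟩ jb rfl]
        exact hjb
      exact hS.2.2 ⟨m + 1 + jb, by have := jb.isLt; omega⟩
        (show m < m + 1 + (jb : ℕ) by omega) hne h1
  constructor
  · intro S hS
    obtain ⟨h02, h12⟩ := key S hS
    rw [sum_theta' p q S]
    by_cases h0 : (0 : Fin 3) ∈ S <;> by_cases h1 : (1 : Fin 3) ∈ S <;>
      by_cases h2 : (2 : Fin 3) ∈ S <;>
      first
        | (exact absurd (h02 ‹_›) ‹_›)
        | (exact absurd (h12 ‹_›) ‹_›)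
        | (simp [h0, h1, h2] <;> omega)
  · intro S hS hne hproper
    obtain ⟨h02, h12⟩ := key S hS
    rw [sum_theta' p q S]
    by_cases h0 : (0 : Fin 3) ∈ S <;> by_cases h1 : (1 : Fin 3) ∈ S <;>
      by_cases h2 : (2 : Fin 3) ∈ S
    · exact absurd (by ext v; fin_cases v <;> simp [h0, h1, h2]) hproper
    · exact absurd (h02 h0) h2
    · simp [h0, h1, h2]; omega
    · exact absurd (h02 h0) h2
    · simp [h0, h1, h2]; omega
    · exact absurd (h12 h1) h2
    · simp [h0, h1, h2]; omega
    · obtain ⟨v, hv⟩ := hne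
      fin_cases v <;> simp_all

private lemma low_ne' (n m : ℕ) (hm : m + 2 ≤ n) (p q : ℤ) (hp : 0 < p) (hpq : p < q)
    (R : (Fin (n+1) → k) × k) (hR : QSemistable n m ![-p, p - q, q] R) (hε : R.2 = 0) :
    (fun j : Fin (m+1) => R.1 ⟨j, by omega⟩) ≠ 0 := by
  intro h0
  have hz : ∀ i : Fin (n+1), (i : ℕ) ≤ m → R.1 i = 0 := by
    intro i hi
    exact congrFun h0 ⟨i, by omega⟩
  have hsupp : QSupport n m R {0} := by
    refine ⟨fun i hi hne _ => absurd (hz i hi) hne, fun h => absurd hε h, fun i _ _ h1 => ?_⟩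
    simp at h1
  have := hR {0} hsupp
  simp [Finset.sum_singleton] at this
  omega

private lemma high_ne' (n m : ℕ) (hm : m + 2 ≤ n) (p q : ℤ) (hp : 0 < p) (hpq : p < q)
    (R : (Fin (n+1) → k) × k) (hR : QSemistable n m ![-p, p - q, q] R) (hε : R.2 = 0) :
    (fun j : Fin (n-m) => R.1 ⟨m + 1 + j, by have := j.isLt; omega⟩) ≠ 0 := by
  intro h0
  have hz : ∀ i : Fin (n+1), m < (i : ℕ) → R.1 i = 0 := by
    intro i hi
    have h := congrFun h0 ⟨(i : ℕ) - (m+1), by have := i.isLt; omega⟩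
    simp only [Pi.zero_apply] at h
    rw [show (⟨m + 1 + ((i : ℕ) - (m+1)), by have := i.isLt; omega⟩ : Fin (n+1)) = i from
      Fin.ext (by simp; omega)] at h
    exact h
  have hsupp : QSupport n m R {1} := by
    refine ⟨fun i _ _ h0' => ?_, fun h => absurd hε h,
      fun i hi hne _ => absurd (hz i hi) hne⟩
    simp at h0'
  have := hR {1} hsupp
  simp [Finset.sum_singleton] at this
  omega

private lemma Gact_comp' (n m : ℕ) (g h : kˣ × kˣ × kˣ) (R : (Fin (n+1) → k) × k) :
    Gact n m g (Gact n m h R) =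
      Gact n m (g.1 * h.1, g.2.1 * h.2.1, g.2.2 * h.2.2) R := by
  unfold Gact
  refine Prod.ext (funext fun i => ?_) ?_
  · by_cases hi : (i : ℕ) ≤ m <;> simp [hi, mul_inv] <;> ring
  · simp [mul_inv]; ring

private lemma Gact_one' (n m : ℕ) (R : (Fin (n+1) → k) × k) :
    Gact n m ((1, 1, 1) : kˣ × kˣ × kˣ) R = R := by
  unfold Gact
  refine Prod.ext (funext fun i => ?_) (by simp)
  by_cases hi : (i : ℕ) ≤ m <;> simp [hi]

private lemma Gact_scale' (n m : ℕ) (hm : m + 2 ≤ n) (c d : kˣ)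
    (a : Fin (m+1) → k) (b : Fin (n-m) → k) :
    Gact n m ((c⁻¹, d⁻¹, 1) : kˣ × kˣ × kˣ) ((glue n m hm a b, 0) : (Fin (n+1) → k) × k)
      = (glue n m hm ((c : k) • a) ((d : k) • b), 0) := by
  unfold Gact
  refine Prod.ext (funext fun i => ?_) (by simp)
  dsimp only
  by_cases hi : (i : ℕ) ≤ m
  · rw [if_pos hi, glue_low' n m hm a b i hi, glue_low' n m hm _ _ i hi]
    simp
  · rw [if_neg hi, glue_high' n m hm a b i ⟨(i : ℕ) - (m+1), by have := i.isLt; omega⟩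
        (show (i : ℕ) = m + 1 + ((i : ℕ) - (m+1)) by omega),
      glue_high' n m hm _ _ i ⟨(i : ℕ) - (m+1), by have := i.isLt; omega⟩
        (show (i : ℕ) = m + 1 + ((i : ℕ) - (m+1)) by omega)]
    simp

private lemma Gact_glue_inv' (n m : ℕ) (hm : m + 2 ≤ n) (g : kˣ × kˣ × kˣ)
    (a a' : Fin (m+1) → k) (b b' : Fin (n-m) → k)
    (h : Gact n m g ((glue n m hm a b, 0) : (Fin (n+1) → k) × k) = (glue n m hm a' b', 0)) :
    a' = ((g.2.2 : k) * (g.1 : k)⁻¹) • a ∧ b' = ((g.2.2 : k) * (g.2.1 : k)⁻¹) • b := by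
  constructor
  · funext j
    have hj := congrFun (congrArg Prod.fst h) ⟨j, by omega⟩
    have hjm : ((j : ℕ)) ≤ m := Nat.lt_succ_iff.mp j.isLt
    unfold Gact at hj
    dsimp only at hj
    rw [if_pos hjm, glue_low' n m hm a b _ hjm, glue_low' n m hm a' b' _ hjm] at hj
    simp only [Pi.smul_apply, smul_eq_mul]
    exact hj.symm
  · funext j
    have hj := congrFun (congrArg Prod.fst h) ⟨m + 1 + j, by have := j.isLt; omega⟩
    have hjm : ¬ ((m + 1 + (j : ℕ))) ≤ m := by omega
    unfold Gact at hj
    dsimp only at hj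
    rw [if_neg hjm, glue_high' n m hm a b _ j rfl, glue_high' n m hm a' b' _ j rfl] at hj
    simp only [Pi.smul_apply, smul_eq_mul]
    exact hj.symm

end stmt12aux

/-- Fix `0 < p < q` and `θ = (−p, p−q, q)`. The map sending
`([a_0:…:a_m], [b_{m+1}:…:b_n]) ∈ P^m(k) × P^{n−m−1}(k)` to the `G`-orbit of the representation
`((a_0,…,a_m,b_{m+1},…,b_n), 0)` is a well-defined bijection from `P^m(k) × P^{n−m−1}(k)` onto
the set of `G`-orbits of `θ`-stable representations of `Q` with dimension vector `(1,1,1)` and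
`ε = 0`. Moreover `F((a_0,…,a_m,b_{m+1},…,b_n), 0) = (a_0,…,a_m,0,…,0)`, so under this bijection
`F` corresponds to the projection onto the first factor `P^m(k)`. -/
theorem stmt12 {k : Type*} [Field k] [IsAlgClosed k] [CharZero k]
    (n m : ℕ) (hn : 2 ≤ n) (hm : m + 2 ≤ n)
    (p q : ℤ) (hp : 0 < p) (hpq : p < q) :
    ∃ T : Projectivization k (Fin (m + 1) → k) × Projectivization k (Fin (n - m) → k) →
        Quot (fun R₁ R₂ : {R : (Fin (n + 1) → k) × k //
            QStable n m ![-p, p - q, q] R ∧ R.2 = 0} =>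
          ∃ g : kˣ × kˣ × kˣ, Gact n m g R₁.1 = R₂.1),
      (∀ (a : Fin (m + 1) → k) (ha : a ≠ 0) (b : Fin (n - m) → k) (hb : b ≠ 0)
          (hs : QStable n m ![-p, p - q, q] ((glue n m hm a b, 0) : (Fin (n + 1) → k) × k) ∧
            ((glue n m hm a b, (0 : k)) : (Fin (n + 1) → k) × k).2 = 0),
        T (Projectivization.mk k a ha, Projectivization.mk k b hb) =
          Quot.mk _ ⟨(glue n m hm a b, 0), hs⟩) ∧
      Function.Bijective T ∧
      (∀ (a : Fin (m + 1) → k) (b : Fin (n - m) → k),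
        Fmap n m ((glue n m hm a b, 0) : (Fin (n + 1) → k) × k) =
          glue n m hm a (fun _ => 0)) := by
  
  classical
  have hrequiv : Equivalence (fun R₁ R₂ : {R : (Fin (n + 1) → k) × k //
      QStable n m ![-p, p - q, q] R ∧ R.2 = 0} =>
      ∃ g : kˣ × kˣ × kˣ, Gact n m g R₁.1 = R₂.1) := by
    constructor
    · exact fun R => ⟨(1, 1, 1), Gact_one' n m R.1⟩
    · rintro R₁ R₂ ⟨g, hg⟩
      refine ⟨(g.1⁻¹, g.2.1⁻¹, g.2.2⁻¹), ?_⟩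
      rw [← hg, Gact_comp']
      simpa using Gact_one' n m R₁.1
    · rintro R₁ R₂ R₃ ⟨g, hg⟩ ⟨g', hg'⟩
      refine ⟨(g'.1 * g.1, g'.2.1 * g.2.1, g'.2.2 * g.2.2), ?_⟩
      rw [← Gact_comp', hg, hg']
  let Ω := {R : (Fin (n + 1) → k) × k // QStable n m ![-p, p - q, q] R ∧ R.2 = 0}
  let rel : Ω → Ω → Prop := fun R₁ R₂ => ∃ g : kˣ × kˣ × kˣ, Gact n m g R₁.1 = R₂.1
  let mkR : ∀ (a : Fin (m+1) → k), a ≠ 0 → ∀ (b : Fin (n-m) → k), b ≠ 0 → Ω :=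
    fun a ha b hb => ⟨(glue n m hm a b, 0), stable_glue' n m hm p q hp hpq a ha b hb, rfl⟩
  have hscale : ∀ (a a' : {v : Fin (m+1) → k // v ≠ 0}) (b b' : {w : Fin (n-m) → k // w ≠ 0})
      (s t : k), a.1 = s • a'.1 → b.1 = t • b'.1 →
      Quot.mk rel (mkR a.1 a.2 b.1 b.2) = Quot.mk rel (mkR a'.1 a'.2 b'.1 b'.2) := by
    intro a a' b b' s t hs ht
    have hs0 : s ≠ 0 := fun h => a.2 (by simp [hs, h])
    have ht0 : t ≠ 0 := fun h => b.2 (by simp [ht, h])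
    refine (Quot.sound ?_).symm
    refine ⟨((Units.mk0 s hs0)⁻¹, (Units.mk0 t ht0)⁻¹, 1), ?_⟩
    rw [Gact_scale' n m hm]
    rw [Units.val_mk0, Units.val_mk0, ← hs, ← ht]
  have hinner : ∀ (a : {v : Fin (m+1) → k // v ≠ 0})
      (b b' : {w : Fin (n-m) → k // w ≠ 0}) (t : k), b.1 = t • b'.1 →
      Quot.mk rel (mkR a.1 a.2 b.1 b.2) = Quot.mk rel (mkR a.1 a.2 b'.1 b'.2) :=
    fun a b b' t ht => hscale a a b b' 1 t (one_smul k a.1).symm ht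
  have hout : ∀ (y : Projectivization k (Fin (n-m) → k))
      (a a' : {v : Fin (m+1) → k // v ≠ 0}) (t : k), a.1 = t • a'.1 →
      Projectivization.lift (fun b => Quot.mk rel (mkR a.1 a.2 b.1 b.2)) (hinner a) y
        = Projectivization.lift (fun b => Quot.mk rel (mkR a'.1 a'.2 b.1 b.2)) (hinner a') y := by
    intro y a a' t hA
    induction y using Projectivization.ind with
    | h w hw =>
      rw [Projectivization.lift_mk, Projectivization.lift_mk]
      exact hscale a a' ⟨w, hw⟩ ⟨w, hw⟩ t 1 hA (one_smul k w).symm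
  let T : Projectivization k (Fin (m + 1) → k) × Projectivization k (Fin (n - m) → k) →
      Quot (fun R₁ R₂ : Ω => ∃ g : kˣ × kˣ × kˣ, Gact n m g R₁.1 = R₂.1) :=
    fun x => Projectivization.lift
      (fun a => Projectivization.lift (fun b => Quot.mk rel (mkR a.1 a.2 b.1 b.2)) (hinner a) x.2)
      (fun a a' t hA => hout x.2 a a' t hA) x.1
  have hT : ∀ (a : Fin (m + 1) → k) (ha : a ≠ 0) (b : Fin (n - m) → k) (hb : b ≠ 0)
      (hs : QStable n m ![-p, p - q, q] ((glue n m hm a b, 0) : (Fin (n + 1) → k) × k) ∧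
        ((glue n m hm a b, (0 : k)) : (Fin (n + 1) → k) × k).2 = 0),
      T (Projectivization.mk k a ha, Projectivization.mk k b hb) =
        Quot.mk _ ⟨(glue n m hm a b, 0), hs⟩ :=
    fun a ha b hb hs => rfl
  refine ⟨T, hT, ⟨?_, ?_⟩, ?_⟩
  · -- injectivity
    rintro ⟨x1, x2⟩ ⟨y1, y2⟩ hxy
    induction x1 using Projectivization.ind with
    | h a ha =>
    induction x2 using Projectivization.ind with
    | h b hb =>
    induction y1 using Projectivization.ind with
    | h a' ha' =>
    induction y2 using Projectivization.ind with
    | h b' hb' =>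
    rw [hT a ha b hb ⟨stable_glue' n m hm p q hp hpq a ha b hb, rfl⟩,
        hT a' ha' b' hb' ⟨stable_glue' n m hm p q hp hpq a' ha' b' hb', rfl⟩] at hxy
    obtain ⟨g, hgact⟩ := hrequiv.eqvGen_iff.mp (Quot.eq.mp hxy)
    obtain ⟨h1, h2⟩ := Gact_glue_inv' n m hm g a a' b b' hgact
    have hc1 : ((g.2.2 : k) * (g.1 : k)⁻¹) ≠ 0 :=
      mul_ne_zero (Units.ne_zero _) (inv_ne_zero (Units.ne_zero _))
    have hc2 : ((g.2.2 : k) * (g.2.1 : k)⁻¹) ≠ 0 :=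
      mul_ne_zero (Units.ne_zero _) (inv_ne_zero (Units.ne_zero _))
    refine Prod.ext ?_ ?_
    · refine ((Projectivization.mk_eq_mk_iff' k a a' ha ha').mpr ?_)
      refine ⟨((g.2.2 : k) * (g.1 : k)⁻¹)⁻¹, ?_⟩
      rw [h1, smul_smul, inv_mul_cancel₀ hc1, one_smul]
    · refine ((Projectivization.mk_eq_mk_iff' k b b' hb hb').mpr ?_)
      refine ⟨((g.2.2 : k) * (g.2.1 : k)⁻¹)⁻¹, ?_⟩
      rw [h2, smul_smul, inv_mul_cancel₀ hc2, one_smul]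
  · -- surjectivity
    intro z
    induction z using Quot.ind with
    | mk R =>
    obtain ⟨⟨A, ε⟩, hprop⟩ := R
    have hε : ε = 0 := hprop.2
    subst hε
    have hstab := hprop.1
    have ha := low_ne' n m hm p q hp hpq (A, 0) hstab.1 rfl
    have hb := high_ne' n m hm p q hp hpq (A, 0) hstab.1 rfl
    have hglue : glue n m hm (fun j : Fin (m+1) => (A, (0:k)).1 ⟨j, by omega⟩)
        (fun j : Fin (n-m) => (A, (0:k)).1 ⟨m + 1 + j, by have := j.isLt; omega⟩) = A := by
      funext i
      by_cases hi : (i : ℕ) ≤ m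
      · rw [glue_low' n m hm _ _ i hi]
      · rw [glue_high' n m hm _ _ i ⟨(i:ℕ) - (m+1), by have := i.isLt; omega⟩
            (show (i:ℕ) = m + 1 + ((i:ℕ) - (m+1)) by omega)]
        show A ⟨m + 1 + ((i:ℕ) - (m+1)), by have := i.isLt; omega⟩ = A i
        exact congrArg A (Fin.ext (show m + 1 + ((i:ℕ) - (m+1)) = (i:ℕ) by omega))
    refine ⟨(Projectivization.mk k _ ha, Projectivization.mk k _ hb), ?_⟩
    rw [hT _ ha _ hb ⟨by rw [hglue]; exact hstab, rfl⟩]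
    exact congrArg (Quot.mk _) (Subtype.ext (by simp only [Prod.mk.injEq]; exact ⟨hglue, trivial⟩))
  · -- Fmap
    intro a b
    funext i
    by_cases hi : (i : ℕ) ≤ m <;> simp [Fmap, glue, hi]
end

section
/- Fix integers 0 < p < q, set θ = (−p, p−q, q) and θ_0 = (−p, p). The map F induces a well-defined bijection from the set of G-orbits of θ-stable representations R = (a_0,…,a_n,ε) of Q with dimension vector (1,1,1) satisfying ε ≠ 0, onto the set of G_0-orbits of θ_0-stable representations (b_0,…,b_n) of the (n+1)-Kronecker quiver Q_0 satisfying b_i ≠ 0 for at least one i with m+1 ≤ i ≤ n. -/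
/-! When `ε ≠ 0`, `θ`-stability of `R` only has to exclude the subrepresentation supported at
vertex 2, of weight `p - q < 0`; so it holds exactly when some `a_i` with `i > m` is nonzero, that
is, when some entry `ε a_i` of `F R` with `i > m` is nonzero. On the Kronecker side
`θ₀`-stability just says `b ≠ 0`. `F` intertwines `(g₁, g₂, g₃)` with `(g₁, g₃)`, so it descends
to orbits; `b` is the image of `(b, 1)`, and an element of `G₀` relating `F R₁` to `F R₂` lifts
to `G` by rescaling vertex 2 by `ε₂ / ε₁`. -/

lemma Finset.fin_two_cases (S : Finset (Fin 2)) :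
    S = ∅ ∨ S = {0} ∨ S = {1} ∨ S = Finset.univ := by
  revert S; decide

lemma Finset.fin_three_cases (S : Finset (Fin 3)) :
    S = ∅ ∨ S = {0} ∨ S = {1} ∨ S = {2} ∨ S = {0, 1} ∨ S = {0, 2} ∨ S = {1, 2} ∨
      S = Finset.univ := by
  revert S; decide

section Stability

variable {k : Type*} [Field k] {n m : ℕ} {p q : ℤ}

lemma kronStable_iff_ne_zero (hp : 0 < p) (b : Fin (n + 1) → k) :
    KronStable n ![-p, p] b ↔ b ≠ 0 := by
  constructor
  · rintro ⟨hss, -⟩ rfl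
    have := hss {0} fun _ hi _ => absurd rfl hi
    simp only [Finset.sum_singleton, Matrix.cons_val_zero] at this
    omega
  · intro hb
    obtain ⟨i, hi⟩ := Function.ne_iff.mp hb
    have h0 : ∀ S, KronSupport n b S → (0 : Fin 2) ∈ S → (1 : Fin 2) ∈ S :=
      fun S hS => hS i hi
    refine ⟨fun S hS => ?_, fun S hS hne hS_ne_univ => ?_⟩
    · rcases S.fin_two_cases with rfl | rfl | rfl | rfl
      · simp
      · exact absurd (h0 _ hS (by decide)) (by decide)
      · simpa using hp.le
      · simp [Fin.sum_univ_two]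
    · rcases S.fin_two_cases with rfl | rfl | rfl | rfl
      · exact absurd hne (by simp)
      · exact absurd (h0 _ hS (by decide)) (by decide)
      · simpa using hp
      · exact absurd rfl hS_ne_univ

lemma qSupport_cases (R : (Fin (n + 1) → k) × k) (hε : R.2 ≠ 0)
    (ha : ∃ i : Fin (n + 1), m < (i : ℕ) ∧ R.1 i ≠ 0) (S : Finset (Fin 3))
    (hS : QSupport n m R S) : S = ∅ ∨ S = {2} ∨ S = {1, 2} ∨ S = Finset.univ := by
  obtain ⟨i, him, hai⟩ := ha
  have h01 := hS.2.1 hε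
  have h12 := hS.2.2 i him hai
  rcases S.fin_three_cases with rfl | rfl | rfl | rfl | rfl | rfl | rfl | rfl
  all_goals first
    | exact absurd (h01 (by decide)) (by decide)
    | exact absurd (h12 (by decide)) (by decide)
    | simp

lemma qStable_iff (hp : 0 < p) (hpq : p < q) (R : (Fin (n + 1) → k) × k) (hε : R.2 ≠ 0) :
    QStable n m ![-p, p - q, q] R ↔ ∃ i : Fin (n + 1), m < (i : ℕ) ∧ R.1 i ≠ 0 := by
  constructor
  · rintro ⟨hss, -⟩
    by_contra! ha
    have hS : QSupport n m R {1} :=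
      ⟨fun _ _ _ h => absurd h (by decide), fun _ h => absurd h (by decide),
        fun i hi hai => absurd (ha i hi) hai⟩
    have := hss {1} hS
    simp only [Finset.sum_singleton, Matrix.cons_val_one, Matrix.cons_val_zero] at this
    omega
  · intro ha
    refine ⟨fun S hS => ?_, fun S hS hne hS_ne_univ => ?_⟩
    · rcases qSupport_cases R hε ha S hS with rfl | rfl | rfl | rfl
      · simp
      · simpa using (hp.trans hpq).le
      · simpa using hp.le
      · simp [Fin.sum_univ_three]; omega
    · rcases qSupport_cases R hε ha S hS with rfl | rfl | rfl | rfl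
      · exact absurd hne (by simp)
      · simpa using hp.trans hpq
      · simpa using hp
      · exact absurd rfl hS_ne_univ

lemma exists_Fmap_ne_zero_iff (R : (Fin (n + 1) → k) × k) (hε : R.2 ≠ 0) :
    (∃ i : Fin (n + 1), m < (i : ℕ) ∧ Fmap n m R i ≠ 0) ↔
      ∃ i : Fin (n + 1), m < (i : ℕ) ∧ R.1 i ≠ 0 := by
  refine exists_congr fun i => and_congr_right fun hi => ?_
  simp [Fmap, Nat.not_le.mpr hi, hε]

lemma kronStable_Fmap (hp : 0 < p) (hpq : p < q) (R : (Fin (n + 1) → k) × k)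
    (hR : QStable n m ![-p, p - q, q] R) (hε : R.2 ≠ 0) :
    KronStable n ![-p, p] (Fmap n m R) ∧
      ∃ i : Fin (n + 1), m < (i : ℕ) ∧ Fmap n m R i ≠ 0 := by
  obtain ⟨i, hi, hFi⟩ := (exists_Fmap_ne_zero_iff R hε).mpr ((qStable_iff hp hpq R hε).mp hR)
  exact ⟨(kronStable_iff_ne_zero hp _).mpr fun h => hFi (congrFun h i), i, hi, hFi⟩

end Stability

section Orbits

variable {k : Type*} [Field k] {n m : ℕ}

lemma Fmap_Gact (g : kˣ × kˣ × kˣ) (R : (Fin (n + 1) → k) × k) :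
    Fmap n m (Gact n m g R) = G0act n (g.1, g.2.2) (Fmap n m R) := by
  funext i
  by_cases hi : (i : ℕ) ≤ m
  · simp [Fmap, Gact, G0act, hi]
  · simp only [Fmap, Gact, G0act, hi, if_false]
    field_simp

lemma Fmap_one (b : Fin (n + 1) → k) : Fmap n m (b, 1) = b := by
  funext i; simp [Fmap]

lemma exists_Gact_eq_of_G0act_Fmap_eq {R₁ R₂ : (Fin (n + 1) → k) × k} (hε₁ : R₁.2 ≠ 0)
    (hε₂ : R₂.2 ≠ 0) {g₀ : kˣ × kˣ} (hg₀ : G0act n g₀ (Fmap n m R₁) = Fmap n m R₂) :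
    ∃ g : kˣ × kˣ × kˣ, Gact n m g R₁ = R₂ := by
  refine ⟨(g₀.1, g₀.1 * Units.mk0 R₂.2 hε₂ * (Units.mk0 R₁.2 hε₁)⁻¹, g₀.2), Prod.ext ?_ ?_⟩
  · funext i
    have hi' := congrFun hg₀ i
    by_cases hi : (i : ℕ) ≤ m
    · simpa [Fmap, Gact, G0act, hi] using hi'
    · simp only [Fmap, Gact, G0act, hi, if_false] at hi' ⊢
      push_cast [Units.val_mk0]
      field_simp at hi' ⊢
      linear_combination hi'
  · simp only [Gact]
    push_cast [Units.val_mk0]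
    field_simp

lemma G0act_rel_equivalence (P : (Fin (n + 1) → k) → Prop) :
    Equivalence fun b₁ b₂ : {b : Fin (n + 1) → k // P b} =>
      ∃ g : kˣ × kˣ, G0act n g b₁.1 = b₂.1 where
  refl _ := ⟨(1, 1), by funext; simp [G0act]⟩
  symm := by
    rintro b₁ b₂ ⟨g, hg⟩
    exact ⟨(g.2, g.1), by rw [← hg]; funext; simp only [G0act]; field_simp⟩
  trans := by
    rintro b₁ b₂ b₃ ⟨g, hg⟩ ⟨g', hg'⟩
    refine ⟨(g'.1 * g.1, g'.2 * g.2), ?_⟩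
    rw [← hg', ← hg]
    funext
    simp only [G0act]
    push_cast
    ring

end Orbits

theorem stmt13_general {k : Type*} [Field k]
    (n m : ℕ)
    (p q : ℤ) (hp : 0 < p) (hpq : p < q) :
    (∀ R : (Fin (n + 1) → k) × k, QStable n m ![-p, p - q, q] R → R.2 ≠ 0 →
      KronStable n ![-p, p] (Fmap n m R) ∧
        ∃ i : Fin (n + 1), m < (i : ℕ) ∧ Fmap n m R i ≠ 0) ∧
    ∃ T : Quot (fun R₁ R₂ : {R : (Fin (n + 1) → k) × k //
            QStable n m ![-p, p - q, q] R ∧ R.2 ≠ 0} =>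
          ∃ g : kˣ × kˣ × kˣ, Gact n m g R₁.1 = R₂.1) →
        Quot (fun b₁ b₂ : {b : Fin (n + 1) → k //
            KronStable n ![-p, p] b ∧ ∃ i : Fin (n + 1), m < (i : ℕ) ∧ b i ≠ 0} =>
          ∃ g : kˣ × kˣ, G0act n g b₁.1 = b₂.1),
      (∀ (R : (Fin (n + 1) → k) × k)
          (hR : QStable n m ![-p, p - q, q] R ∧ R.2 ≠ 0)
          (hFR : KronStable n ![-p, p] (Fmap n m R) ∧
            ∃ i : Fin (n + 1), m < (i : ℕ) ∧ Fmap n m R i ≠ 0),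
        T (Quot.mk _ ⟨R, hR⟩) = Quot.mk _ ⟨Fmap n m R, hFR⟩) ∧
      Function.Bijective T := by
  have hF := fun R : {R : (Fin (n + 1) → k) × k // QStable n m ![-p, p - q, q] R ∧ R.2 ≠ 0} =>
    kronStable_Fmap hp hpq R.1 R.2.1 R.2.2
  refine ⟨fun R hR hε => kronStable_Fmap hp hpq R hR hε,
    Quot.lift (fun R => Quot.mk _ ⟨Fmap n m R.1, hF R⟩) ?_, fun _ _ _ => rfl, ?_, ?_⟩
  · rintro R₁ R₂ ⟨g, hg⟩
    exact Quot.sound ⟨(g.1, g.2.2), by simp only [← hg, Fmap_Gact]⟩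
  · rintro ⟨R₁⟩ ⟨R₂⟩ h
    obtain ⟨g₀, hg₀⟩ := (G0act_rel_equivalence _).eqvGen_iff.mp (Quot.eqvGen_exact h)
    exact Quot.sound (exists_Gact_eq_of_G0act_Fmap_eq R₁.2.2 R₂.2.2 hg₀)
  · rintro ⟨b, hb⟩
    have hQ : QStable n m ![-p, p - q, q] (b, 1) :=
      (qStable_iff hp hpq (b, 1) one_ne_zero).mpr hb.2
    exact ⟨Quot.mk _ ⟨(b, 1), hQ, one_ne_zero⟩, congrArg _ (Subtype.ext (Fmap_one b))⟩

/-- Fix `0 < p < q`, `θ = (−p, p−q, q)` and `θ₀ = (−p, p)`. The map `F` induces a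
well-defined bijection from the set of `G`-orbits of `θ`-stable representations
`R = ((a_0,…,a_n), ε)` of `Q` with dimension vector `(1,1,1)` and `ε ≠ 0`, onto the set of
`G₀`-orbits of `θ₀`-stable representations `(b_0,…,b_n)` of the `(n+1)`-Kronecker quiver with
`b_i ≠ 0` for at least one `i` with `m+1 ≤ i ≤ n`. -/
theorem stmt13 {k : Type*} [Field k] [IsAlgClosed k] [CharZero k]
    (n m : ℕ) (hn : 2 ≤ n) (hm : m + 2 ≤ n)
    (p q : ℤ) (hp : 0 < p) (hpq : p < q) :
    (∀ R : (Fin (n + 1) → k) × k, QStable n m ![-p, p - q, q] R → R.2 ≠ 0 →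
      KronStable n ![-p, p] (Fmap n m R) ∧
        ∃ i : Fin (n + 1), m < (i : ℕ) ∧ Fmap n m R i ≠ 0) ∧
    ∃ T : Quot (fun R₁ R₂ : {R : (Fin (n + 1) → k) × k //
            QStable n m ![-p, p - q, q] R ∧ R.2 ≠ 0} =>
          ∃ g : kˣ × kˣ × kˣ, Gact n m g R₁.1 = R₂.1) →
        Quot (fun b₁ b₂ : {b : Fin (n + 1) → k //
            KronStable n ![-p, p] b ∧ ∃ i : Fin (n + 1), m < (i : ℕ) ∧ b i ≠ 0} =>
          ∃ g : kˣ × kˣ, G0act n g b₁.1 = b₂.1),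
      (∀ (R : (Fin (n + 1) → k) × k)
          (hR : QStable n m ![-p, p - q, q] R ∧ R.2 ≠ 0)
          (hFR : KronStable n ![-p, p] (Fmap n m R) ∧
            ∃ i : Fin (n + 1), m < (i : ℕ) ∧ Fmap n m R i ≠ 0),
        T (Quot.mk _ ⟨R, hR⟩) = Quot.mk _ ⟨Fmap n m R, hFR⟩) ∧
      Function.Bijective T :=
  stmt13_general n m p q hp hpq
end

section
/- Fix integers 0 < p < q and set θ = (−p, p−q, q). Let L = {[a_0:…:a_n] ∈ P^n(k) : a_{m+1} = … = a_n = 0}. The map sending [a_0:…:a_n] ∈ P^n(k) \ L to the G-orbit of (a_0,…,a_n,1), and sending ([a_0:…:a_m],[b_{m+1}:…:b_n]) ∈ P^m(k) × P^{n−m−1}(k) to the G-orbit of (a_0,…,a_m,b_{m+1},…,b_n,0), is a well-defined bijection from the disjoint union (P^n(k) \ L) ⊔ (P^m(k) × P^{n−m−1}(k)) onto the set of G-orbits of θ-stable representations of Q with dimension vector (1,1,1). (This is the point-level content of the theorem that the tautological map from the blow-up of P^n along the m-plane L to the fine moduli space M_θ is an isomorphism.) -/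
lemma sum_fin3 {p q : ℤ} (S : Finset (Fin 3)) :
    ∑ v ∈ S, (![-p, p - q, q]) v =
      (if (0 : Fin 3) ∈ S then -p else 0) + (if (1 : Fin 3) ∈ S then p - q else 0) +
        (if (2 : Fin 3) ∈ S then q else 0) := by
  rw [← Finset.univ_inter S, ← Finset.sum_ite_mem, Fin.sum_univ_three]
  simp

lemma qstable_iff {k : Type*} [Field k] (n m : ℕ) (p q : ℤ) (hp : 0 < p) (hpq : p < q)
    (a : Fin (n + 1) → k) (ε : k) :
    QStable n m ![-p, p - q, q] (a, ε) ↔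
      (∃ i : Fin (n + 1), m < (i : ℕ) ∧ a i ≠ 0) ∧
        (ε ≠ 0 ∨ ∃ i : Fin (n + 1), (i : ℕ) ≤ m ∧ a i ≠ 0) := by
  constructor
  · rintro ⟨hss, hst⟩
    constructor
    · by_contra hc
      push_neg at hc
      have hsup : QSupport n m (a, ε) ({1} : Finset (Fin 3)) := by
        refine ⟨fun i hi hai h0 => ?_, fun _ h0 => ?_, fun i hi hai h1 => ?_⟩
        · simp at h0
        · simp at h0
        · exact absurd (hc i hi) hai
      have := hst {1} hsup ⟨1, by simp⟩ (by
        intro h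
        have : (0 : Fin 3) ∈ ({1} : Finset (Fin 3)) := h ▸ Finset.mem_univ _
        simp at this)
      rw [sum_fin3] at this
      simp at this
      omega
    · by_contra hc
      push_neg at hc
      obtain ⟨hε, hc⟩ := hc
      have hsup : QSupport n m (a, ε) ({0} : Finset (Fin 3)) := by
        refine ⟨fun i hi hai h0 => ?_, fun hε' _ => ?_, fun i hi hai h1 => ?_⟩
        · exact absurd (hc i hi) hai
        · exact absurd hε hε'
        · simp at h1
      have := hst {0} hsup ⟨0, by simp⟩ (by
        intro h
        have : (1 : Fin 3) ∈ ({0} : Finset (Fin 3)) := h ▸ Finset.mem_univ _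
        simp at this)
      rw [sum_fin3] at this
      simp at this
      omega
  · rintro ⟨⟨i0, hi0, ha0⟩, h2⟩
    have key : ∀ S : Finset (Fin 3), QSupport n m (a, ε) S → S ≠ Finset.univ →
        S.Nonempty → 0 < ∑ v ∈ S, (![-p, p - q, q]) v := by
      intro S hS hSu hSne
      rw [sum_fin3]
      by_cases h0 : (0 : Fin 3) ∈ S <;> by_cases h1 : (1 : Fin 3) ∈ S <;>
        by_cases h2' : (2 : Fin 3) ∈ S
      · exact absurd (Finset.eq_univ_iff_forall.mpr (by intro v; fin_cases v <;> assumption)) hSu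
      · exact absurd (hS.2.2 i0 hi0 ha0 h1) h2'
      · simp only [if_pos h0, if_neg h1, if_pos h2']; omega
      · rcases h2 with hε | ⟨j, hj, haj⟩
        · exact absurd (hS.2.1 hε h0) h1
        · exact absurd (hS.1 j hj haj h0) h2'
      · simp only [if_neg h0, if_pos h1, if_pos h2']; omega
      · exact absurd (hS.2.2 i0 hi0 ha0 h1) h2'
      · simp only [if_neg h0, if_neg h1, if_pos h2']; omega
      · obtain ⟨v, hv⟩ := hSne
        fin_cases v <;> [exact absurd hv h0; exact absurd hv h1; exact absurd hv h2']
    refine ⟨fun S hS => ?_, fun S hS hne hu => key S hS hu hne⟩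
    by_cases hu : S = Finset.univ
    · subst hu
      rw [sum_fin3]
      simp only [Finset.mem_univ, if_pos]
      omega
    · rcases S.eq_empty_or_nonempty with rfl | hne
      · simp
      · exact le_of_lt (key S hS hu hne)

section Helpers

variable {k : Type*} [Field k]

lemma gact_one (n m : ℕ) (R : (Fin (n + 1) → k) × k) : Gact n m 1 R = R := by
  obtain ⟨a, ε⟩ := R
  unfold Gact
  simp

lemma gact_comp (n m : ℕ) (g h : kˣ × kˣ × kˣ) (R : (Fin (n + 1) → k) × k) :
    Gact n m g (Gact n m h R) = Gact n m (g * h) R := by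
  obtain ⟨a, ε⟩ := R
  unfold Gact
  refine Prod.ext ?_ ?_
  · funext i
    by_cases hi : (i : ℕ) ≤ m <;>
      simp only [if_pos, if_neg, hi, if_true, if_false, Prod.fst_mul, Prod.snd_mul,
        Units.val_mul, mul_inv] <;> ring
  · simp only [Prod.fst_mul, Prod.snd_mul, Units.val_mul, mul_inv]
    ring

lemma gact_unif (n m : ℕ) (c : kˣ) (a : Fin (n + 1) → k) (ε : k) :
    Gact n m (1, 1, c) (a, ε) = (c • a, ε) := by
  unfold Gact
  refine Prod.ext ?_ ?_
  · funext i
    by_cases hi : (i : ℕ) ≤ m <;> simp [hi, Units.smul_def]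
  · simp

lemma glue_apply_left (n m : ℕ) (hm : m + 2 ≤ n) (a : Fin (m + 1) → k) (b : Fin (n - m) → k)
    (i : Fin (n + 1)) (h : (i : ℕ) ≤ m) : glue n m hm a b i = a ⟨i, by omega⟩ :=
  dif_pos h

lemma glue_apply_right (n m : ℕ) (hm : m + 2 ≤ n) (a : Fin (m + 1) → k) (b : Fin (n - m) → k)
    (i : Fin (n + 1)) (h : m < (i : ℕ)) :
    glue n m hm a b i = b ⟨(i : ℕ) - (m + 1), by have := i.isLt; omega⟩ :=
  dif_neg (not_le.mpr h)

lemma glue_right' (n m : ℕ) (hm : m + 2 ≤ n) (a : Fin (m + 1) → k) (b : Fin (n - m) → k)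
    (j : Fin (n - m)) : glue n m hm a b ⟨m + 1 + (j : ℕ), by omega⟩ = b j := by
  rw [glue_apply_right n m hm a b _ (by show m < m + 1 + (j : ℕ); omega)]
  congr 1
  ext
  simp

lemma glue_left' (n m : ℕ) (hm : m + 2 ≤ n) (a : Fin (m + 1) → k) (b : Fin (n - m) → k)
    (j : Fin (m + 1)) : glue n m hm a b ⟨(j : ℕ), by omega⟩ = a j := by
  rw [glue_apply_left n m hm a b _ (by simp; omega)]

lemma gact_glue (n m : ℕ) (hm : m + 2 ≤ n) (u w : kˣ) (a : Fin (m + 1) → k)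
    (b : Fin (n - m) → k) :
    Gact n m (u, w, 1) (glue n m hm (u • a) (w • b), 0) = (glue n m hm a b, 0) := by
  unfold Gact
  refine Prod.ext ?_ ?_
  · funext i
    dsimp only
    by_cases hi : (i : ℕ) ≤ m
    · rw [if_pos hi, glue_apply_left n m hm _ _ i hi, glue_apply_left n m hm _ _ i hi]
      simp [Units.smul_def]
    · rw [if_neg hi, glue_apply_right n m hm _ _ i (by omega),
        glue_apply_right n m hm _ _ i (by omega)]
      simp [Units.smul_def]
  · simp

end Helpers

section Helpers2

variable {k : Type*} [Field k]

lemma stableA (n m : ℕ) (p q : ℤ) (hp : 0 < p) (hpq : p < q) (a : Fin (n + 1) → k)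
    (h : ∃ i : Fin (n + 1), m < (i : ℕ) ∧ a i ≠ 0) :
    QStable n m ![-p, p - q, q] ((a, 1) : (Fin (n + 1) → k) × k) :=
  (qstable_iff n m p q hp hpq a 1).mpr ⟨h, Or.inl one_ne_zero⟩

lemma stableB (n m : ℕ) (hm : m + 2 ≤ n) (p q : ℤ) (hp : 0 < p) (hpq : p < q)
    (a : Fin (m + 1) → k) (ha : a ≠ 0) (b : Fin (n - m) → k) (hb : b ≠ 0) :
    QStable n m ![-p, p - q, q] ((glue n m hm a b, 0) : (Fin (n + 1) → k) × k) := by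
  rw [qstable_iff n m p q hp hpq]
  constructor
  · obtain ⟨j, hj⟩ := Function.ne_iff.mp hb
    refine ⟨⟨m + 1 + (j : ℕ), by omega⟩, by show m < m + 1 + (j : ℕ); omega, ?_⟩
    rw [glue_right' n m hm a b j]
    exact hj
  · refine Or.inr ?_
    obtain ⟨j, hj⟩ := Function.ne_iff.mp ha
    refine ⟨⟨(j : ℕ), by omega⟩, by show (j : ℕ) ≤ m; omega, ?_⟩
    rw [glue_left' n m hm a b j]
    exact hj

/-- The orbit relation. -/
def Grel (n m : ℕ) (p q : ℤ) :
    {R : (Fin (n + 1) → k) × k // QStable n m ![-p, p - q, q] R} →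
      {R : (Fin (n + 1) → k) × k // QStable n m ![-p, p - q, q] R} → Prop :=
  fun R₁ R₂ => ∃ g : kˣ × kˣ × kˣ, Gact n m g R₁.1 = R₂.1

lemma grel_equiv (n m : ℕ) (p q : ℤ) : Equivalence (Grel (k := k) n m p q) := by
  refine ⟨fun R => ⟨1, gact_one n m R.1⟩, ?_, ?_⟩
  · rintro R S ⟨g, hg⟩
    exact ⟨g⁻¹, by rw [← hg, gact_comp, inv_mul_cancel, gact_one]⟩
  · rintro R S U ⟨g, hg⟩ ⟨g', hg'⟩
    exact ⟨g' * g, by rw [← gact_comp, hg, hg']⟩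

lemma grel_quot_eq (n m : ℕ) (p q : ℤ)
    (x y : {R : (Fin (n + 1) → k) × k // QStable n m ![-p, p - q, q] R}) :
    Quot.mk (Grel n m p q) x = Quot.mk (Grel n m p q) y ↔ Grel n m p q x y :=
  ⟨fun h => ((grel_equiv n m p q).eqvGen_iff).mp (Quot.eq.mp h), Quot.sound⟩

/-- The tautological map. -/
noncomputable def Tmap (n m : ℕ) (hm : m + 2 ≤ n) (p q : ℤ) (hp : 0 < p) (hpq : p < q) :
    ({x : Projectivization k (Fin (n + 1) → k) //
        ¬ ∀ i : Fin (n + 1), m < (i : ℕ) → x.rep i = 0} ⊕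
      (Projectivization k (Fin (m + 1) → k) × Projectivization k (Fin (n - m) → k))) →
      Quot (Grel (k := k) n m p q) :=
  Sum.elim
    (fun x => Quot.mk _ ⟨(x.1.rep, 1), stableA n m p q hp hpq x.1.rep (by
      have h := x.2; push_neg at h; exact h)⟩)
    (fun uv => Quot.mk _ ⟨(glue n m hm uv.1.rep uv.2.rep, 0),
      stableB n m hm p q hp hpq uv.1.rep uv.1.rep_nonzero uv.2.rep uv.2.rep_nonzero⟩)

lemma rep_scale (K : Type*) [Field K] {V : Type*} [AddCommGroup V] [Module K V] (a : V) (ha : a ≠ 0) :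
    ∃ c : Kˣ, c • a = (Projectivization.mk K a ha).rep := by
  have h1 : Projectivization.mk K ((Projectivization.mk K a ha).rep)
      ((Projectivization.mk K a ha).rep_nonzero) = Projectivization.mk K a ha :=
    Projectivization.mk_rep _
  rw [Projectivization.mk_eq_mk_iff] at h1
  exact h1

lemma Tmap_inl (n m : ℕ) (hm : m + 2 ≤ n) (p q : ℤ) (hp : 0 < p) (hpq : p < q)
    (a : Fin (n + 1) → k) (ha : a ≠ 0)
    (hL : ¬ ∀ i : Fin (n + 1), m < (i : ℕ) → (Projectivization.mk k a ha).rep i = 0)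
    (hs : QStable n m ![-p, p - q, q] ((a, 1) : (Fin (n + 1) → k) × k)) :
    Tmap n m hm p q hp hpq (Sum.inl ⟨Projectivization.mk k a ha, hL⟩) =
      Quot.mk _ ⟨(a, 1), hs⟩ := by
  obtain ⟨c, hc⟩ := rep_scale k a ha
  refine Quot.sound ⟨(1, 1, c⁻¹), ?_⟩
  rw [gact_unif, ← hc, inv_smul_smul]

lemma Tmap_inr (n m : ℕ) (hm : m + 2 ≤ n) (p q : ℤ) (hp : 0 < p) (hpq : p < q)
    (a : Fin (m + 1) → k) (ha : a ≠ 0) (b : Fin (n - m) → k) (hb : b ≠ 0)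
    (hs : QStable n m ![-p, p - q, q] ((glue n m hm a b, 0) : (Fin (n + 1) → k) × k)) :
    Tmap n m hm p q hp hpq
        (Sum.inr (Projectivization.mk k a ha, Projectivization.mk k b hb)) =
      Quot.mk _ ⟨(glue n m hm a b, 0), hs⟩ := by
  obtain ⟨u, hu⟩ := rep_scale k a ha
  obtain ⟨w, hw⟩ := rep_scale k b hb
  refine Quot.sound ⟨(u, w, 1), ?_⟩
  show Gact n m (u, w, 1)
    (glue n m hm (Projectivization.mk k a ha).rep (Projectivization.mk k b hb).rep, 0) = _
  rw [← hu, ← hw, gact_glue]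

end Helpers2

lemma proj_eq_of_rep_smul {K V : Type*} [Field K] [AddCommGroup V] [Module K V]
    (x y : Projectivization K V) (c : Kˣ) (h : y.rep = c • x.rep) : x = y := by
  conv_lhs => rw [← Projectivization.mk_rep x]
  conv_rhs => rw [← Projectivization.mk_rep y]
  rw [Projectivization.mk_eq_mk_iff]
  exact ⟨c⁻¹, by rw [h, inv_smul_smul]⟩

/-- Fix `0 < p < q` and `θ = (−p, p−q, q)`. Let
`L = {[a_0:…:a_n] ∈ P^n(k) : a_{m+1} = … = a_n = 0}`. The map sending `[a_0:…:a_n] ∈ P^n(k) ∖ L`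
to the `G`-orbit of `((a_0,…,a_n), 1)` and sending
`([a_0:…:a_m],[b_{m+1}:…:b_n]) ∈ P^m(k) × P^{n−m−1}(k)` to the `G`-orbit of
`((a_0,…,a_m,b_{m+1},…,b_n), 0)` is a well-defined bijection from the disjoint union
`(P^n(k) ∖ L) ⊔ (P^m(k) × P^{n−m−1}(k))` onto the set of `G`-orbits of `θ`-stable
representations of `Q` with dimension vector `(1,1,1)`. (Point-level content of: the tautological
map from the blow-up of `P^n` along the `m`-plane `L` to the fine moduli space `M_θ` is an
isomorphism.) -/
theorem stmt14 {k : Type*} [Field k] [IsAlgClosed k] [CharZero k]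
    (n m : ℕ) (hn : 2 ≤ n) (hm : m + 2 ≤ n)
    (p q : ℤ) (hp : 0 < p) (hpq : p < q) :
    ∃ T : ({x : Projectivization k (Fin (n + 1) → k) //
            ¬ ∀ i : Fin (n + 1), m < (i : ℕ) → x.rep i = 0} ⊕
          (Projectivization k (Fin (m + 1) → k) × Projectivization k (Fin (n - m) → k))) →
        Quot (fun R₁ R₂ : {R : (Fin (n + 1) → k) × k // QStable n m ![-p, p - q, q] R} =>
          ∃ g : kˣ × kˣ × kˣ, Gact n m g R₁.1 = R₂.1),
      (∀ (a : Fin (n + 1) → k) (ha : a ≠ 0)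
          (hL : ¬ ∀ i : Fin (n + 1), m < (i : ℕ) → (Projectivization.mk k a ha).rep i = 0)
          (hs : QStable n m ![-p, p - q, q] ((a, 1) : (Fin (n + 1) → k) × k)),
        T (Sum.inl ⟨Projectivization.mk k a ha, hL⟩) = Quot.mk _ ⟨(a, 1), hs⟩) ∧
      (∀ (a : Fin (m + 1) → k) (ha : a ≠ 0) (b : Fin (n - m) → k) (hb : b ≠ 0)
          (hs : QStable n m ![-p, p - q, q] ((glue n m hm a b, 0) : (Fin (n + 1) → k) × k)),
        T (Sum.inr (Projectivization.mk k a ha, Projectivization.mk k b hb)) =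
          Quot.mk _ ⟨(glue n m hm a b, 0), hs⟩) ∧
      Function.Bijective T := by
  classical
  refine ⟨Tmap n m hm p q hp hpq,
    fun a ha hL hs => Tmap_inl n m hm p q hp hpq a ha hL hs,
    fun a ha b hb hs => Tmap_inr n m hm p q hp hpq a ha b hb hs, ?_, ?_⟩
  · -- Injectivity
    rintro (x | uv) (y | uv') h
    · -- inl / inl
      simp only [Tmap, Sum.elim_inl] at h
      obtain ⟨g, hg⟩ := (grel_quot_eq n m p q _ _).mp h
      have h2 : (g.2.1 : k) * (g.1 : k)⁻¹ * 1 = 1 := congrArg Prod.snd hg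
      rw [mul_one, mul_inv_eq_one₀ (Units.ne_zero g.1)] at h2
      have h1 : (fun i : Fin (n + 1) => if (i : ℕ) ≤ m
            then (g.2.2 : k) * (g.1 : k)⁻¹ * x.1.rep i
            else (g.2.2 : k) * (g.2.1 : k)⁻¹ * x.1.rep i) = y.1.rep :=
        congrArg Prod.fst hg
      have hy : y.1.rep = (g.2.2 * g.1⁻¹ : kˣ) • x.1.rep := by
        funext i
        rw [← h1]
        by_cases hi : (i : ℕ) ≤ m
        · simp only [if_pos hi]
          simp [Units.smul_def, Units.val_mul]
        · simp only [if_neg hi]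
          simp [Units.smul_def, Units.val_mul, h2]
      exact congrArg Sum.inl (Subtype.ext (proj_eq_of_rep_smul x.1 y.1 _ hy))
    · -- inl / inr
      simp only [Tmap, Sum.elim_inl, Sum.elim_inr] at h
      obtain ⟨g, hg⟩ := (grel_quot_eq n m p q _ _).mp h
      have h2 : (g.2.1 : k) * (g.1 : k)⁻¹ * 1 = 0 := congrArg Prod.snd hg
      simp at h2
    · -- inr / inl
      simp only [Tmap, Sum.elim_inl, Sum.elim_inr] at h
      obtain ⟨g, hg⟩ := (grel_quot_eq n m p q _ _).mp h
      have h2 : (g.2.1 : k) * (g.1 : k)⁻¹ * 0 = 1 := congrArg Prod.snd hg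
      simp at h2
    · -- inr / inr
      simp only [Tmap, Sum.elim_inr] at h
      obtain ⟨g, hg⟩ := (grel_quot_eq n m p q _ _).mp h
      have h1 : (fun i : Fin (n + 1) => if (i : ℕ) ≤ m
            then (g.2.2 : k) * (g.1 : k)⁻¹ * glue n m hm uv.1.rep uv.2.rep i
            else (g.2.2 : k) * (g.2.1 : k)⁻¹ * glue n m hm uv.1.rep uv.2.rep i) =
          glue n m hm uv'.1.rep uv'.2.rep :=
        congrArg Prod.fst hg
      have hu : uv'.1.rep = (g.2.2 * g.1⁻¹ : kˣ) • uv.1.rep := by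
        funext j
        have hj := congrFun h1 ⟨(j : ℕ), by have := j.isLt; omega⟩
        dsimp only at hj
        rw [if_pos (show ((j : ℕ) : ℕ) ≤ m from Nat.lt_succ_iff.mp j.isLt),
          glue_left', glue_left'] at hj
        rw [← hj]
        simp [Units.smul_def, Units.val_mul]
      have hv : uv'.2.rep = (g.2.2 * g.2.1⁻¹ : kˣ) • uv.2.rep := by
        funext j
        have hj := congrFun h1 ⟨m + 1 + (j : ℕ), by have := j.isLt; omega⟩
        dsimp only at hj
        rw [if_neg (show ¬ (m + 1 + (j : ℕ) ≤ m) by omega),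
          glue_right', glue_right'] at hj
        rw [← hj]
        simp [Units.smul_def, Units.val_mul]
      refine congrArg Sum.inr (Prod.ext ?_ ?_)
      · exact proj_eq_of_rep_smul uv.1 uv'.1 _ hu
      · exact proj_eq_of_rep_smul uv.2 uv'.2 _ hv
  · -- Surjectivity
    intro y
    obtain ⟨R, rfl⟩ := Quot.exists_rep y
    obtain ⟨⟨a, ε⟩, hs⟩ := R
    obtain ⟨⟨i0, hi0, ha0⟩, h2⟩ := (qstable_iff n m p q hp hpq a ε).mp hs
    by_cases hε : ε = 0
    · subst hε
      rcases h2 with h2 | ⟨i1, hi1, ha1⟩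
      · exact absurd rfl h2
      · have haa : (fun j : Fin (m + 1) => a ⟨(j : ℕ), by have := j.isLt; omega⟩) ≠ 0 := by
          intro h0
          apply ha1
          have h3 := congrFun h0 ⟨(i1 : ℕ), by omega⟩
          simpa using h3
        have hbb : (fun j : Fin (n - m) => a ⟨m + 1 + (j : ℕ), by have := j.isLt; omega⟩)
            ≠ 0 := by
          intro h0
          apply ha0
          have h3 := congrFun h0 ⟨(i0 : ℕ) - (m + 1), by have := i0.isLt; omega⟩
          simp only [Pi.zero_apply] at h3
          convert h3 using 2
          exact (Fin.ext (show m + 1 + ((i0 : ℕ) - (m + 1)) = (i0 : ℕ) by omega)).symm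
        have hglue : glue n m hm (fun j : Fin (m + 1) => a ⟨(j : ℕ), by have := j.isLt; omega⟩)
            (fun j : Fin (n - m) => a ⟨m + 1 + (j : ℕ), by have := j.isLt; omega⟩) = a := by
          funext i
          by_cases hi : (i : ℕ) ≤ m
          · rw [glue_apply_left n m hm _ _ i hi]
          · rw [glue_apply_right n m hm _ _ i (by omega)]
            exact congrArg a (Fin.ext (show m + 1 + ((i : ℕ) - (m + 1)) = (i : ℕ) by omega))
        have hs' : QStable n m ![-p, p - q, q]
            ((glue n m hm (fun j : Fin (m + 1) => a ⟨(j : ℕ), by have := j.isLt; omega⟩)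
              (fun j : Fin (n - m) => a ⟨m + 1 + (j : ℕ), by have := j.isLt; omega⟩), 0) :
                (Fin (n + 1) → k) × k) := by
          rw [hglue]; exact hs
        refine ⟨Sum.inr (Projectivization.mk k _ haa, Projectivization.mk k _ hbb), ?_⟩
        rw [Tmap_inr n m hm p q hp hpq _ haa _ hbb hs']
        exact congrArg (Quot.mk _) (Subtype.ext (Prod.ext hglue rfl))
    · -- ε ≠ 0
      have hnle : ¬ (i0 : ℕ) ≤ m := not_le.mpr hi0
      have ha'i0 : (fun i : Fin (n + 1) => if (i : ℕ) ≤ m then a i else ε * a i) i0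
          = ε * a i0 := by simp [hnle]
      have ha' : (fun i : Fin (n + 1) => if (i : ℕ) ≤ m then a i else ε * a i) ≠ 0 := by
        intro h0
        have h3 := congrFun h0 i0
        simp only [if_neg hnle, Pi.zero_apply] at h3
        exact mul_ne_zero hε ha0 h3
      obtain ⟨c, hc⟩ := rep_scale k _ ha'
      have hL : ¬ ∀ i : Fin (n + 1), m < (i : ℕ) →
          (Projectivization.mk k _ ha').rep i = 0 := by
        intro hall
        have h3 := hall i0 hi0
        rw [← hc] at h3
        simp only [Pi.smul_apply, Units.smul_def, smul_eq_mul, if_neg hnle] at h3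
        rcases mul_eq_zero.mp h3 with h4 | h4
        · exact Units.ne_zero c h4
        · exact mul_ne_zero hε ha0 h4
      have hs1 : QStable n m ![-p, p - q, q]
          (((fun i : Fin (n + 1) => if (i : ℕ) ≤ m then a i else ε * a i), 1) :
            (Fin (n + 1) → k) × k) :=
        stableA n m p q hp hpq _ ⟨i0, hi0, by rw [if_neg hnle]; exact mul_ne_zero hε ha0⟩
      refine ⟨Sum.inl ⟨Projectivization.mk k _ ha', hL⟩, ?_⟩
      rw [Tmap_inl n m hm p q hp hpq _ ha' hL hs1]
      refine Quot.sound ⟨(1, Units.mk0 ε hε, 1), ?_⟩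
      unfold Gact
      refine Prod.ext ?_ (by simp)
      funext i
      dsimp only
      by_cases hi : (i : ℕ) ≤ m
      · simp only [if_pos hi]
        simp
      · simp only [if_neg hi, Units.val_one, Units.val_mk0, one_mul]
        field_simp
end
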